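/- arXiv:2012.05284 — 4 statements merged into one kernel-verified Lean document; each statement's English description precedes it below -/
import Mathlib

section
/- Let f be convex and differentiable with L-Lipschitz gradient on ℝ^d, and let X ⊆ ℝ^d be convex. If x₁* and x₂* both minimize f over X, then ∇f(x₁*) = ∇f(x₂*). -/
/-!
Shifting `f` by the linear function `⟪∇f(p), ·⟫` gives a convex `L`-smooth function minimized
at `p`. By the descent lemma, its gradient step of length `1/L` from `z` lowers it by
`‖∇f(z) - ∇f(p)‖² / (2L)`, so `f p + ⟪∇f(p), z - p⟫ + ‖∇f(z) - ∇f(p)‖² / (2L) ≤ f z`.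
For two minimizers over `X` the first-order optimality condition makes the inner product
nonnegative while `f x₁ = f x₂`, which forces the gradient gap to vanish.
-/

open Set InnerProductSpace AffineMap
open scoped RealInnerProductSpace

variable {E : Type*} [NormedAddCommGroup E] [InnerProductSpace ℝ E] [CompleteSpace E]
  {f : E → ℝ} {g : E → E} {G x y : E} {L : ℝ}

theorem HasGradientAt.hasDerivAt_comp_lineMap {t : ℝ} (h : HasGradientAt f G (lineMap x y t)) :
    HasDerivAt (fun s : ℝ => f (lineMap x y s)) ⟪G, y - x⟫ t := by
  have := h.hasFDerivAt.comp_hasDerivAt t hasDerivAt_lineMap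
  simp only [toDual_apply_apply] at this
  exact this

theorem HasGradientAt.sub_inner_const (h : HasGradientAt f G x) (a : E) :
    HasGradientAt (fun w => f w - ⟪a, w⟫) (G - a) x := by
  rw [hasGradientAt_iff_hasFDerivAt, map_sub]
  exact h.hasFDerivAt.sub (toDual ℝ E a).hasFDerivAt

theorem ConvexOn.inner_gradient_le_sub {s : Set E} (hf : ConvexOn ℝ s f) (hx : x ∈ s)
    (hy : y ∈ s) (h : HasGradientAt f G x) : ⟪G, y - x⟫ ≤ f y - f x := by
  have hd := HasGradientAt.hasDerivAt_comp_lineMap (y := y) (t := 0) (by simpa using h)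
  simpa [slope] using (hf.comp_affineMap (lineMap x y)).le_slope_of_hasDerivAt
    (by simpa using hx) (by simpa using hy) one_pos hd

theorem IsMinOn.inner_gradient_nonneg {s : Set E} (hs : Convex ℝ s) (hmin : IsMinOn f s x)
    (hx : x ∈ s) (h : HasGradientAt f G x) (hy : y ∈ s) : 0 ≤ ⟪G, y - x⟫ := by
  simpa using (IsMinOn.localize hmin).hasFDerivWithinAt_nonneg
    h.hasFDerivAt.hasFDerivWithinAt
    (sub_mem_posTangentConeAt_of_segment_subset (hs.segment_subset hx hy))

theorem le_add_inner_add_of_lipschitz_gradient (hgrad : ∀ x, HasGradientAt f (g x) x)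
    (hlip : ∀ x y, ‖g x - g y‖ ≤ L * ‖x - y‖) (x y : E) :
    f y ≤ f x + ⟪g x, y - x⟫ + L / 2 * ‖y - x‖ ^ 2 := by
  set φ : ℝ → ℝ := fun t => f (lineMap x y t) - t * ⟪g x, y - x⟫
  set B : ℝ → ℝ := fun t => f x + L / 2 * t ^ 2 * ‖y - x‖ ^ 2
  have hφ : ∀ t, HasDerivAt φ ⟪g (lineMap x y t) - g x, y - x⟫ t := fun t => by
    rw [inner_sub_left]
    exact (hgrad _).hasDerivAt_comp_lineMap.sub (by simpa using (hasDerivAt_id t).mul_const _)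
  have hB : ∀ t, HasDerivAt B (L * t * ‖y - x‖ ^ 2) t := fun t => by
    have := (((hasDerivAt_pow 2 t).const_mul (L / 2)).mul_const (‖y - x‖ ^ 2)).const_add (f x)
    exact this.congr_deriv (by ring)
  have hbound : ∀ t ∈ Ico (0 : ℝ) 1, ⟪g (lineMap x y t) - g x, y - x⟫ ≤ L * t * ‖y - x‖ ^ 2 :=
    fun t ht => calc
      _ ≤ ‖g (lineMap x y t) - g x‖ * ‖y - x‖ := real_inner_le_norm _ _
      _ ≤ L * ‖lineMap x y t - x‖ * ‖y - x‖ := by gcongr; exact hlip _ _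
      _ = L * t * ‖y - x‖ ^ 2 := by
        rw [← vsub_eq_sub, lineMap_vsub_left, vsub_eq_sub, norm_smul, Real.norm_of_nonneg ht.1]
        ring
  have := image_le_of_deriv_right_le_deriv_boundary (a := 0) (b := 1)
    (fun t _ => (hφ t).continuousAt.continuousWithinAt) (fun t _ => (hφ t).hasDerivWithinAt)
    (by simp [φ, B]) (fun t _ => (hB t).continuousAt.continuousWithinAt)
    (fun t _ => (hB t).hasDerivWithinAt) hbound (right_mem_Icc.mpr zero_le_one)
  simp only [φ, B, lineMap_apply_one] at this
  linarith

theorem add_sq_norm_gradient_div_le_of_forall_le (hgrad : ∀ x, HasGradientAt f (g x) x)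
    (hL : 0 < L) (hlip : ∀ x y, ‖g x - g y‖ ≤ L * ‖x - y‖) {p : E} (hmin : ∀ w, f p ≤ f w)
    (z : E) : f p + ‖g z‖ ^ 2 / (2 * L) ≤ f z := by
  have hstep : f (z - L⁻¹ • g z) ≤ f z - ‖g z‖ ^ 2 / (2 * L) := by
    have := le_add_inner_add_of_lipschitz_gradient hgrad hlip z (z - L⁻¹ • g z)
    rw [sub_sub_cancel_left, inner_neg_right, real_inner_smul_right, real_inner_self_eq_norm_sq,
      norm_neg, norm_smul, Real.norm_of_nonneg (inv_nonneg.mpr hL.le)] at this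
    convert this using 1
    field_simp
    ring
  linarith [hmin (z - L⁻¹ • g z)]

theorem ConvexOn.add_inner_add_sq_norm_sub_div_le (hf : ConvexOn ℝ univ f)
    (hgrad : ∀ x, HasGradientAt f (g x) x) (hL : 0 < L)
    (hlip : ∀ x y, ‖g x - g y‖ ≤ L * ‖x - y‖) (p z : E) :
    f p + ⟪g p, z - p⟫ + ‖g z - g p‖ ^ 2 / (2 * L) ≤ f z := by
  have hmin : ∀ w, f p - ⟪g p, p⟫ ≤ f w - ⟪g p, w⟫ := fun w => by
    have := hf.inner_gradient_le_sub (mem_univ p) (mem_univ w) (hgrad p)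
    rw [inner_sub_right] at this
    linarith
  have := add_sq_norm_gradient_div_le_of_forall_le (fun w => (hgrad w).sub_inner_const (g p)) hL
    (fun a b => by simpa only [sub_sub_sub_cancel_right] using hlip a b) hmin z
  rw [inner_sub_right]
  linarith

/-- If `x₁*` and `x₂*` both minimize a convex `L`-smooth `f` over a convex set `X`,
then `∇f(x₁*) = ∇f(x₂*)`. -/
theorem gradient_unique_at_minimizers
    {d : ℕ} (f : EuclideanSpace ℝ (Fin d) → ℝ)
    (g : EuclideanSpace ℝ (Fin d) → EuclideanSpace ℝ (Fin d))
    (hgrad : ∀ x, HasGradientAt f (g x) x)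
    (hconv : ConvexOn ℝ Set.univ f)
    (L : ℝ) (hL : 0 < L)
    (hlip : ∀ x y, ‖g x - g y‖ ≤ L * ‖x - y‖)
    (X : Set (EuclideanSpace ℝ (Fin d))) (hXconv : Convex ℝ X)
    (x1 x2 : EuclideanSpace ℝ (Fin d)) (hx1 : x1 ∈ X) (hx2 : x2 ∈ X)
    (hmin1 : ∀ y ∈ X, f x1 ≤ f y) (hmin2 : ∀ y ∈ X, f x2 ≤ f y) :
    g x1 = g x2 := by
  have hcoc := hconv.add_inner_add_sq_norm_sub_div_le hgrad hL hlip x1 x2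
  have hopt := (isMinOn_iff.mpr hmin1).inner_gradient_nonneg hXconv hx1 (hgrad x1) hx2
  have hval : f x2 ≤ f x1 := hmin2 x1 hx1
  have hgap : ‖g x2 - g x1‖ ^ 2 / (2 * L) ≤ 0 := by linarith
  rw [div_le_iff₀ (by positivity), zero_mul, sq_nonpos_iff, norm_sub_eq_zero_iff] at hgap
  exact hgap.symm
end

section
/- Let C₁ > 0, G* ≥ 0, δ_τ = 2/(τ+3), and suppose ‖a_{τ+1} − g*‖₂ ≤ C₁/√(τ+3) for all τ ≥ 0, where ‖g*‖₂ = G*. Then the weighted average g_{k+1} = Σ_{τ=0}^{k} (2(τ+2)/((k+2)(k+3))) a_{τ+1} satisfies ‖g_{k+1} − g*‖₂ ≤ 4C₁/(3(√(k+3)−1)) + 2G*/((k+2)(k+3)). -/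
/-!
Write `K = (k+2)(k+3) = (s-1)(s+1)s²` with `s = √(k+3)`. The weights sum to `1 - 2/K`, so the
error splits into `∑ w_τ (a_{τ+1} - g*)` and the missing mass `(2/K) g*`. Each term of the first
sum is at most `(2C₁/K)(τ+2)/√(τ+3) ≤ (2C₁/K)√(τ+3)`, and `∑_{j ≤ k+3} √j ≤ (2/3)(s+1)s²`, which
gives `4C₁/(3(s-1))`.
-/

open Finset Real

theorem norm_sum_smul_sub_le {ι E : Type*} [SeminormedAddCommGroup E] [NormedSpace ℝ E]
    (s : Finset ι) {w : ι → ℝ} (hw : ∀ i ∈ s, 0 ≤ w i) (x : ι → E) (g : E) :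
    ‖∑ i ∈ s, w i • x i - g‖ ≤ ∑ i ∈ s, w i * ‖x i - g‖ + |1 - ∑ i ∈ s, w i| * ‖g‖ := by
  have hsplit : ∑ i ∈ s, w i • x i - g = ∑ i ∈ s, w i • (x i - g) - (1 - ∑ i ∈ s, w i) • g := by
    simp only [smul_sub, sum_sub_distrib, sub_smul, one_smul, sum_smul]
    abel
  calc ‖∑ i ∈ s, w i • x i - g‖
      ≤ ‖∑ i ∈ s, w i • (x i - g)‖ + ‖(1 - ∑ i ∈ s, w i) • g‖ := hsplit ▸ norm_sub_le _ _
    _ ≤ ∑ i ∈ s, ‖w i • (x i - g)‖ + |1 - ∑ i ∈ s, w i| * ‖g‖ := by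
        rw [norm_smul, Real.norm_eq_abs]
        gcongr
        exact norm_sum_le _ _
    _ = ∑ i ∈ s, w i * ‖x i - g‖ + |1 - ∑ i ∈ s, w i| * ‖g‖ := by
        congr 1
        refine sum_congr rfl fun i hi => ?_
        rw [norm_smul, Real.norm_of_nonneg (hw i hi)]

theorem one_sub_sum_range_two_mul_add_two_div (k : ℕ) :
    1 - ∑ τ ∈ range (k + 1), 2 * ((τ : ℝ) + 2) / (((k : ℝ) + 2) * ((k : ℝ) + 3)) =
      2 / (((k : ℝ) + 2) * ((k : ℝ) + 3)) := by
  have hsum : ∑ τ ∈ range (k + 1), 2 * ((τ : ℝ) + 2) = ((k : ℝ) + 2) * ((k : ℝ) + 3) - 2 := by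
    induction k with
    | zero => norm_num
    | succ n ih =>
      rw [sum_range_succ, ih]
      push_cast
      ring
  rw [← sum_div, hsum]
  field_simp
  ring

theorem sum_range_sqrt_le (n : ℕ) :
    ∑ j ∈ range (n + 1), √(j : ℝ) ≤ 2 / 3 * (√(n : ℝ) + 1) * n := by
  induction n with
  | zero => simp
  | succ n ih =>
    rw [sum_range_succ]
    push_cast
    set x := √((n : ℝ) + 1)
    set y := √(n : ℝ)
    have hx2 : x ^ 2 = n + 1 := sq_sqrt (by positivity)
    have hy2 : y ^ 2 = n := sq_sqrt (by positivity)
    have hy0 : 0 ≤ y := sqrt_nonneg _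
    have hyx : y ≤ x := sqrt_le_sqrt (by linarith)
    -- the increment `(2/3)((x + 1)x² - (y + 1)y²)` dominates `x` because `(x - y)(x + y) = 1`
    nlinarith [mul_nonneg hy0 (sub_nonneg.2 hyx), mul_nonneg (sub_nonneg.2 hyx) (sub_nonneg.2 hyx)]

theorem sum_range_sqrt_add_three_le (k : ℕ) :
    ∑ τ ∈ range (k + 1), √((τ : ℝ) + 3) ≤ 2 / 3 * (√((k : ℝ) + 3) + 1) * ((k : ℝ) + 3) := by
  have hshift : ∑ j ∈ range (k + 4), √(j : ℝ) =
      ∑ j ∈ range 3, √(j : ℝ) + ∑ τ ∈ range (k + 1), √((τ : ℝ) + 3) := by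
    rw [show k + 4 = 3 + (k + 1) by omega, sum_range_add]
    push_cast
    simp only [add_comm (3 : ℝ)]
  have hhead : 0 ≤ ∑ j ∈ range 3, √(j : ℝ) := sum_nonneg fun _ _ => sqrt_nonneg _
  have := sum_range_sqrt_le (k + 3)
  push_cast at this
  linarith

theorem two_mul_div_mul_two_div_three_mul_sqrt_add_one_mul_eq (C : ℝ) {t : ℝ} (ht : 0 ≤ t) :
    2 * C / ((t + 2) * (t + 3)) * (2 / 3 * (√(t + 3) + 1) * (t + 3)) =
      4 * C / (3 * (√(t + 3) - 1)) := by
  have hs : 1 < √(t + 3) := by rw [lt_sqrt zero_le_one]; linarith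
  have hfactor : t + 2 = (√(t + 3) - 1) * (√(t + 3) + 1) := by
    nlinarith [sq_sqrt (by linarith : 0 ≤ t + 3)]
  rw [hfactor]
  field_simp [(by linarith : √(t + 3) - 1 ≠ 0)]
  ring

theorem div_sqrt_le_sqrt_of_le {x y : ℝ} (h : x ≤ y) : x / √y ≤ √y :=
  (div_le_div_of_nonneg_right h (sqrt_nonneg y)).trans_eq div_sqrt

theorem weighted_average_error_bound_general
    {d : ℕ} (a : ℕ → EuclideanSpace ℝ (Fin d))
    (gstar : EuclideanSpace ℝ (Fin d)) (Gstar : ℝ) (hG : ‖gstar‖ = Gstar)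
    (C₁ : ℝ)
    (ha : ∀ τ : ℕ, ‖a (τ+1) - gstar‖ ≤ C₁ / Real.sqrt ((τ : ℝ) + 3)) :
    ∀ k : ℕ,
      ‖(∑ τ ∈ Finset.range (k+1),
          (2 * ((τ : ℝ) + 2) / (((k : ℝ) + 2) * ((k : ℝ) + 3))) • a (τ+1)) - gstar‖ ≤
        4 * C₁ / (3 * (Real.sqrt ((k : ℝ) + 3) - 1)) +
          2 * Gstar / (((k : ℝ) + 2) * ((k : ℝ) + 3)) := by
  intro k
  set K := ((k : ℝ) + 2) * ((k : ℝ) + 3)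
  have hK : 0 < K := by positivity
  have hC₁ : 0 ≤ C₁ := by
    simpa using (le_div_iff₀ (sqrt_pos.2 (by positivity))).1 ((norm_nonneg _).trans (ha 0))
  have hmass : 1 - ∑ τ ∈ range (k + 1), 2 * ((τ : ℝ) + 2) / K = 2 / K :=
    one_sub_sum_range_two_mul_add_two_div k
  have hterm (τ : ℕ) : 2 * ((τ : ℝ) + 2) / K * ‖a (τ + 1) - gstar‖ ≤ 2 * C₁ / K * √((τ : ℝ) + 3) :=
    calc _ ≤ 2 * ((τ : ℝ) + 2) / K * (C₁ / √((τ : ℝ) + 3)) := by gcongr; exact ha τ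
      _ = 2 * C₁ / K * (((τ : ℝ) + 2) / √((τ : ℝ) + 3)) := by ring
      _ ≤ 2 * C₁ / K * √((τ : ℝ) + 3) := by gcongr; exact div_sqrt_le_sqrt_of_le (by linarith)
  calc _ ≤ ∑ τ ∈ range (k + 1), 2 * ((τ : ℝ) + 2) / K * ‖a (τ + 1) - gstar‖ +
          |1 - ∑ τ ∈ range (k + 1), 2 * ((τ : ℝ) + 2) / K| * ‖gstar‖ :=
        norm_sum_smul_sub_le _ (fun τ _ => by positivity) _ _
    _ ≤ 2 * C₁ / K * ∑ τ ∈ range (k + 1), √((τ : ℝ) + 3) + 2 * Gstar / K := by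
        rw [hmass, hG, abs_of_pos (by positivity), div_mul_eq_mul_div, mul_sum]
        gcongr ?_ + _
        exact sum_le_sum fun τ _ => hterm τ
    _ ≤ 2 * C₁ / K * (2 / 3 * (√((k : ℝ) + 3) + 1) * ((k : ℝ) + 3)) + 2 * Gstar / K := by
        gcongr
        exact sum_range_sqrt_add_three_le k
    _ = _ := by rw [two_mul_div_mul_two_div_three_mul_sqrt_add_one_mul_eq C₁ k.cast_nonneg]

/-- If `‖a_{τ+1} − g*‖₂ ≤ C₁/√(τ+3)` for all `τ`, then the weighted average
`g_{k+1} = Σ_{τ=0}^k (2(τ+2)/((k+2)(k+3))) a_{τ+1}` satisfies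
`‖g_{k+1} − g*‖₂ ≤ 4C₁/(3(√(k+3)−1)) + 2G*/((k+2)(k+3))`. -/
theorem weighted_average_error_bound
    {d : ℕ} (a : ℕ → EuclideanSpace ℝ (Fin d))
    (gstar : EuclideanSpace ℝ (Fin d)) (Gstar : ℝ) (hG : ‖gstar‖ = Gstar)
    (hGnn : 0 ≤ Gstar)
    (C₁ : ℝ) (hC₁ : 0 < C₁)
    (ha : ∀ τ : ℕ, ‖a (τ+1) - gstar‖ ≤ C₁ / Real.sqrt ((τ : ℝ) + 3)) :
    ∀ k : ℕ,
      ‖(∑ τ ∈ Finset.range (k+1),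
          (2 * ((τ : ℝ) + 2) / (((k : ℝ) + 2) * ((k : ℝ) + 3))) • a (τ+1)) - gstar‖ ≤
        4 * C₁ / (3 * (Real.sqrt ((k : ℝ) + 3) - 1)) +
          2 * Gstar / (((k : ℝ) + 2) * ((k : ℝ) + 3)) :=
  weighted_average_error_bound_general a gstar Gstar hG C₁ ha
end

section
/- Let f be convex differentiable with L-Lipschitz gradient (in a norm ‖·‖ with dual norm ‖·‖_*), let X be convex with diameter D, and let x_k, v_k, v̂_{k+1} ∈ X, δ_k ∈ (0,1). Define y_k = (1−δ_k)x_k + δ_k v_k and x_{k+1} = (1−δ_k)x_k + δ_k v̂_{k+1}. Then f(x_{k+1}) ≤ (1−δ_k) f(x_k) + δ_k f(y_k) + δ_k ⟨∇f(y_k), v̂_{k+1} − y_k⟩ + (Lδ_k²/2)‖v̂_{k+1} − v_k‖². -/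
/-!
Since `x_{k+1} - y_k = δ (v̂_{k+1} - v_k)`, the descent lemma for the `L`-smooth `f` at `y_k` gives
`f(x_{k+1}) ≤ f(y_k) + ⟨∇f(y_k), x_{k+1} - y_k⟩ + (L δ² / 2) ‖v̂_{k+1} - v_k‖²`. Splitting
`x_{k+1} - y_k = (1 - δ)(x_k - y_k) + δ (v̂_{k+1} - y_k)` and bounding
`f(y_k) + ⟨∇f(y_k), x_k - y_k⟩ ≤ f(x_k)` by convexity yields the claim.
-/

open Set

section Descent

variable {E : Type*} [NormedAddCommGroup E] [NormedSpace ℝ E]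
  {f : E → ℝ} {g : E → E →L[ℝ] ℝ} {L : ℝ} {X : Set E}

theorem Convex.fderiv_apply_sub_le_of_lipschitzOn (hX : Convex ℝ X)
    (hlip : ∀ x ∈ X, ∀ y ∈ X, ‖g x - g y‖ ≤ L * ‖x - y‖) {a b : E} (ha : a ∈ X) (hb : b ∈ X)
    {t : ℝ} (ht : t ∈ Icc (0 : ℝ) 1) :
    g (a + t • (b - a)) (b - a) - g a (b - a) ≤ L * t * ‖b - a‖ ^ 2 := by
  set w := b - a
  calc g (a + t • w) w - g a w = (g (a + t • w) - g a) w := rfl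
    _ ≤ ‖g (a + t • w) - g a‖ * ‖w‖ := (le_abs_self _).trans ((g (a + t • w) - g a).le_opNorm w)
    _ ≤ L * ‖(a + t • w) - a‖ * ‖w‖ :=
        mul_le_mul_of_nonneg_right (hlip _ (hX.add_smul_sub_mem ha hb ht) _ ha) (norm_nonneg w)
    _ = L * t * ‖w‖ ^ 2 := by
        rw [add_sub_cancel_left, norm_smul, Real.norm_of_nonneg ht.1]; ring

theorem Convex.le_add_fderiv_add_sq_of_lipschitzOn (hX : Convex ℝ X)
    (hderiv : ∀ x, HasFDerivAt f (g x) x)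
    (hlip : ∀ x ∈ X, ∀ y ∈ X, ‖g x - g y‖ ≤ L * ‖x - y‖) {a b : E} (ha : a ∈ X) (hb : b ∈ X) :
    f b ≤ f a + g a (b - a) + L / 2 * ‖b - a‖ ^ 2 := by
  set w := b - a
  -- `f` along the segment minus its quadratic upper model is antitone on `[0, 1]`.
  set φ : ℝ → ℝ := fun t ↦ f (a + t • w) - t * g a w - L / 2 * t ^ 2 * ‖w‖ ^ 2
  have hφ : ∀ t, HasDerivAt φ (g (a + t • w) w - g a w - L * t * ‖w‖ ^ 2) t := by
    intro t
    have hline : HasDerivAt (fun s : ℝ ↦ a + s • w) w t := by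
      simpa using ((hasDerivAt_id t).smul_const w).const_add a
    exact ((((hderiv _).comp_hasDerivAt t hline).sub ((hasDerivAt_id t).mul_const (g a w))).sub
      (((hasDerivAt_pow 2 t).const_mul (L / 2)).mul_const (‖w‖ ^ 2))).congr_deriv (by ring)
  have hanti : AntitoneOn φ (Icc 0 1) := by
    refine antitoneOn_of_hasDerivWithinAt_nonpos (convex_Icc 0 1)
      (fun t _ ↦ (hφ t).continuousAt.continuousWithinAt) (fun t _ ↦ (hφ t).hasDerivWithinAt) ?_
    intro t ht
    rw [interior_Icc] at ht
    linarith [hX.fderiv_apply_sub_le_of_lipschitzOn hlip ha hb (Ioo_subset_Icc_self ht)]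
  have := hanti (left_mem_Icc.2 zero_le_one) (right_mem_Icc.2 zero_le_one) zero_le_one
  have hab : a + w = b := add_sub_cancel a b
  simp only [φ, zero_smul, add_zero, one_smul, zero_mul, sub_zero, one_mul, one_pow, mul_one,
    ne_eq, OfNat.ofNat_ne_zero, not_false_eq_true, zero_pow, hab] at this
  linarith

end Descent

theorem extrafw_descent_step_general
    {E : Type*} [NormedAddCommGroup E] [NormedSpace ℝ E]
    (f : E → ℝ) (g : E → E →L[ℝ] ℝ)
    (hderiv : ∀ x, HasFDerivAt f (g x) x)
    (L : ℝ)
    (X : Set E) (hXconv : Convex ℝ X)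
    (hlip : ∀ x ∈ X, ∀ y ∈ X, ‖g x - g y‖ ≤ L * ‖x - y‖)
    (hconv : ∀ x ∈ X, ∀ y ∈ X, f y + g y (x - y) ≤ f x)
    (xk vk vhat : E) (hxk : xk ∈ X) (hvk : vk ∈ X) (hvhat : vhat ∈ X)
    (δ : ℝ) (hδ : δ ∈ Set.Ioo (0:ℝ) 1)
    (yk xk1 : E)
    (hyk : yk = (1 - δ) • xk + δ • vk)
    (hxk1 : xk1 = (1 - δ) • xk + δ • vhat) :
    f xk1 ≤ (1 - δ) * f xk + δ * f yk + δ * g yk (vhat - yk) +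
      L * δ^2 / 2 * ‖vhat - vk‖^2 := by
  obtain ⟨hδ0, hδ1⟩ := hδ
  have hykX : yk ∈ X := hyk ▸ hXconv hxk hvk (sub_nonneg.2 hδ1.le) hδ0.le (sub_add_cancel 1 δ)
  have hxk1X : xk1 ∈ X :=
    hxk1 ▸ hXconv hxk hvhat (sub_nonneg.2 hδ1.le) hδ0.le (sub_add_cancel 1 δ)
  have hlin : g yk (xk1 - yk) = (1 - δ) * g yk (xk - yk) + δ * g yk (vhat - yk) := by
    have : xk1 - yk = (1 - δ) • (xk - yk) + δ • (vhat - yk) := by rw [hxk1, hyk]; module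
    rw [this, map_add, map_smul, map_smul, smul_eq_mul, smul_eq_mul]
  have hnorm : ‖xk1 - yk‖ = δ * ‖vhat - vk‖ := by
    have : xk1 - yk = δ • (vhat - vk) := by rw [hxk1, hyk]; module
    rw [this, norm_smul, Real.norm_of_nonneg hδ0.le]
  have hsupport := mul_le_mul_of_nonneg_left (hconv xk hxk yk hykX) (sub_nonneg.2 hδ1.le)
  calc f xk1 ≤ f yk + g yk (xk1 - yk) + L / 2 * ‖xk1 - yk‖ ^ 2 :=
        hXconv.le_add_fderiv_add_sq_of_lipschitzOn hderiv hlip hykX hxk1X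
    _ = (1 - δ) * (f yk + g yk (xk - yk)) + δ * f yk + δ * g yk (vhat - yk) +
          L * δ ^ 2 / 2 * ‖vhat - vk‖ ^ 2 := by rw [hlin, hnorm]; ring
    _ ≤ _ := by linarith

/-- Descent inequality for the prediction step of ExtraFW: with
`y_k = (1−δ_k)x_k + δ_k v_k` and `x_{k+1} = (1−δ_k)x_k + δ_k v̂_{k+1}`,
`f(x_{k+1}) ≤ (1−δ_k)f(x_k) + δ_k f(y_k) + δ_k⟨∇f(y_k), v̂_{k+1} − y_k⟩
 + (Lδ_k²/2)‖v̂_{k+1} − v_k‖²`. -/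
theorem extrafw_descent_step
    {E : Type*} [NormedAddCommGroup E] [NormedSpace ℝ E]
    (f : E → ℝ) (g : E → E →L[ℝ] ℝ)
    (hderiv : ∀ x, HasFDerivAt f (g x) x)
    (L : ℝ) (hL : 0 < L)
    (X : Set E) (hXconv : Convex ℝ X)
    (D : ℝ) (hdiam : ∀ x ∈ X, ∀ y ∈ X, ‖x - y‖ ≤ D)
    (hlip : ∀ x ∈ X, ∀ y ∈ X, ‖g x - g y‖ ≤ L * ‖x - y‖)
    (hconv : ∀ x ∈ X, ∀ y ∈ X, f y + g y (x - y) ≤ f x)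
    (xk vk vhat : E) (hxk : xk ∈ X) (hvk : vk ∈ X) (hvhat : vhat ∈ X)
    (δ : ℝ) (hδ : δ ∈ Set.Ioo (0:ℝ) 1)
    (yk xk1 : E)
    (hyk : yk = (1 - δ) • xk + δ • vk)
    (hxk1 : xk1 = (1 - δ) • xk + δ • vhat) :
    f xk1 ≤ (1 - δ) * f xk + δ * f yk + δ * g yk (vhat - yk) +
      L * δ^2 / 2 * ‖vhat - vk‖^2 :=
  extrafw_descent_step_general f g hderiv L X hXconv hlip hconv xk vk vhat hxk hvk hvhat δ hδ yk xk1
    hyk hxk1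
end

section
/- Under Assumptions of smoothness (L-Lipschitz gradient), convexity, and compact convex constraint X of diameter D, the ExtraFW iterates with δ_k = 2/(k+3) and g_0 = 0 satisfy f(x_k) − f(x*) ≤ 2(f(x_0) − f(x*))/((k+1)(k+2)) + 6LD²/(k+2) for all k ≥ 0. -/
/-!
The potential `Φ k = f (x k) - f x* + ⟪g k, x* - v k⟫` dominates the gap `f (x k) - f x*`, because
`v k` minimizes `⟪g k, ·⟫` over `X` (and `g 0 = 0`). One ExtraFW step contracts it:
`Φ (k+1) ≤ (1 - δ k) Φ k + (3/2) δ k² L D²`, combining convexity of `f` at `y k`, the descent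
lemma from `y k` to `x (k+1)`, and the extragradient correction `g (k+1) - ĝ (k+1)`, which is
`δ k` times a gradient difference over a step of length at most `δ k D`. With `δ k = 2/(k+3)`
the recursion unrolls to the stated rate.
-/

open scoped RealInnerProductSpace
open AffineMap Set

variable {E : Type*} [NormedAddCommGroup E] [InnerProductSpace ℝ E] [CompleteSpace E]
  {f : E → ℝ} {f' : E} {s : Set E} {a b : E}

theorem HasGradientAt.hasDerivAt_comp_lineMap_s19 {t : ℝ} (h : HasGradientAt f f' (lineMap a b t)) :
    HasDerivAt (f ∘ lineMap a b) ⟪f', b - a⟫ t := by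
  simpa using h.hasFDerivAt.comp_hasDerivAt t hasDerivAt_lineMap

theorem ConvexOn.inner_gradient_sub_le (hf : ConvexOn ℝ s f) (ha : a ∈ s) (hb : b ∈ s)
    (h : HasGradientAt f f' a) : ⟪f', b - a⟫ ≤ f b - f a := by
  have hline : ConvexOn ℝ (Icc (0 : ℝ) 1) (f ∘ lineMap a b) :=
    (hf.comp_affineMap (lineMap a b)).subset (fun t ht => hf.1.lineMap_mem ha hb ht)
      (convex_Icc 0 1)
  have h0 : HasGradientAt f f' (lineMap a b (0 : ℝ)) := by rwa [lineMap_apply_zero]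
  simpa [slope] using hline.le_slope_of_hasDerivAt (left_mem_Icc.2 zero_le_one)
    (right_mem_Icc.2 zero_le_one) zero_lt_one h0.hasDerivAt_comp_lineMap_s19

theorem Convex.le_add_inner_gradient_add_sq_of_lipschitz (hs : Convex ℝ s) {g : E → E}
    (hg : ∀ x, HasGradientAt f (g x) x) {L : ℝ}
    (hL : ∀ x ∈ s, ∀ y ∈ s, ‖g x - g y‖ ≤ L * ‖x - y‖) (ha : a ∈ s) (hb : b ∈ s) :
    f b ≤ f a + ⟪g a, b - a⟫ + L / 2 * ‖b - a‖ ^ 2 := by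
  have hφ (t : ℝ) : HasDerivAt (f ∘ lineMap a b) ⟪g (lineMap a b t), b - a⟫ t :=
    (hg _).hasDerivAt_comp_lineMap_s19
  have hB (t : ℝ) : HasDerivAt (fun t => f a + t * ⟪g a, b - a⟫ + t ^ 2 * (L / 2 * ‖b - a‖ ^ 2))
      (⟪g a, b - a⟫ + L * t * ‖b - a‖ ^ 2) t := by
    refine ((((hasDerivAt_id t).mul_const _).const_add (f a)).add
      ((hasDerivAt_pow 2 t).mul_const _)).congr_deriv ?_
    simp only [one_mul, Nat.cast_ofNat]; ring
  have hderiv_le (t : ℝ) (ht : t ∈ Ico (0 : ℝ) 1) :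
      ⟪g (lineMap a b t), b - a⟫ ≤ ⟪g a, b - a⟫ + L * t * ‖b - a‖ ^ 2 := by
    have hmem : lineMap a b t ∈ s := hs.lineMap_mem ha hb ⟨ht.1, ht.2.le⟩
    have hdist : ‖lineMap a b t - a‖ = t * ‖b - a‖ := by
      rw [lineMap_apply_module', add_sub_cancel_right, norm_smul, Real.norm_of_nonneg ht.1]
    calc ⟪g (lineMap a b t), b - a⟫
        = ⟪g a, b - a⟫ + ⟪g (lineMap a b t) - g a, b - a⟫ := by rw [inner_sub_left]; ring
      _ ≤ ⟪g a, b - a⟫ + ‖g (lineMap a b t) - g a‖ * ‖b - a‖ := by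
          gcongr; exact real_inner_le_norm _ _
      _ ≤ ⟪g a, b - a⟫ + L * ‖lineMap a b t - a‖ * ‖b - a‖ := by
          gcongr; exact hL _ hmem _ ha
      _ = ⟪g a, b - a⟫ + L * t * ‖b - a‖ ^ 2 := by rw [hdist]; ring
  have := image_le_of_deriv_right_le_deriv_boundary
    (fun t _ => (hφ t).continuousAt.continuousWithinAt)
    (fun t _ => (hφ t).hasDerivWithinAt) (by simp)
    (fun t _ => (hB t).continuousAt.continuousWithinAt)
    (fun t _ => (hB t).hasDerivWithinAt) hderiv_le (right_mem_Icc.2 zero_le_one)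
  simpa using this

section ExtraFW

variable {X : Set E} {gradf : E → E} {L D δ : ℝ}

theorem extraFW_potential_step (hX : Convex ℝ X) (hgrad : ∀ z, HasGradientAt f (gradf z) z)
    (hf : ConvexOn ℝ X f) (hL : 0 ≤ L) (hD : 0 ≤ D)
    (hlip : ∀ x ∈ X, ∀ y ∈ X, ‖gradf x - gradf y‖ ≤ L * ‖x - y‖)
    (hdiam : ∀ x ∈ X, ∀ y ∈ X, ‖x - y‖ ≤ D) (hδ0 : 0 ≤ δ) (hδ1 : δ ≤ 1)
    {x v y ghat vhat x' g g' v' xstar : E} (hx : x ∈ X) (hv : v ∈ X) (hxstar : xstar ∈ X)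
    (hg : ∀ u ∈ X, ⟪g, v⟫ ≤ ⟪g, u⟫)
    (hy : y = (1 - δ) • x + δ • v) (hghat : ghat = (1 - δ) • g + δ • gradf y)
    (hvhat : vhat ∈ X ∧ ∀ u ∈ X, ⟪ghat, vhat⟫ ≤ ⟪ghat, u⟫)
    (hx' : x' = (1 - δ) • x + δ • vhat) (hg' : g' = (1 - δ) • g + δ • gradf x')
    (hv' : v' ∈ X ∧ ∀ u ∈ X, ⟪g', v'⟫ ≤ ⟪g', u⟫) :
    f x' - f xstar + ⟪g', xstar - v'⟫ ≤
      (1 - δ) * (f x - f xstar + ⟪g, xstar - v⟫) + 3 / 2 * δ ^ 2 * (L * D ^ 2) := by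
  have hyX : y ∈ X := hy ▸ hX hx hv (by linarith) hδ0 (by ring)
  have hx'X : x' ∈ X := hx' ▸ hX hx hvhat.1 (by linarith) hδ0 (by ring)
  have hzX : (1 - δ) • x + δ • xstar ∈ X := hX hx hxstar (by linarith) hδ0 (by ring)
  have hstep : ‖x' - y‖ ≤ δ * D := by
    rw [show x' - y = δ • (vhat - v) by rw [hx', hy, smul_sub]; abel, norm_smul,
      Real.norm_of_nonneg hδ0]
    exact mul_le_mul_of_nonneg_left (hdiam _ hvhat.1 _ hv) hδ0
  have hcorr : ⟪g', xstar - v'⟫ ≤ ⟪ghat, xstar - vhat⟫ + δ ^ 2 * (L * D ^ 2) :=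
    calc ⟪g', xstar - v'⟫
        = ⟪ghat, xstar - v'⟫ + δ * ⟪gradf x' - gradf y, xstar - v'⟫ := by
          rw [hg', hghat, ← real_inner_smul_left, ← inner_add_left, smul_sub]; congr 1; abel
      _ ≤ ⟪ghat, xstar - vhat⟫ + δ * (‖gradf x' - gradf y‖ * ‖xstar - v'‖) := by
          gcongr
          · simpa only [inner_sub_right, sub_le_sub_iff_left] using hvhat.2 v' hv'.1
          · exact real_inner_le_norm _ _
      _ ≤ ⟪ghat, xstar - vhat⟫ + δ * (L * (δ * D) * D) := by
          gcongr
          · exact (hlip _ hx'X _ hyX).trans (by gcongr)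
          · exact hdiam _ hxstar _ hv'.1
      _ = ⟪ghat, xstar - vhat⟫ + δ ^ 2 * (L * D ^ 2) := by ring
  have hsplit : ⟪ghat, xstar - vhat⟫ = (1 - δ) * ⟪g, xstar - vhat⟫
      + ⟪gradf y, ((1 - δ) • x + δ • xstar) - y⟫ + ⟪gradf y, y - x'⟫ := by
    have hdir : δ • (xstar - vhat) = ((1 - δ) • x + δ • xstar) - y + (y - x') := by
      rw [hx']; module
    rw [hghat, inner_add_left, real_inner_smul_left, real_inner_smul_left, add_assoc,
      ← inner_add_right, ← hdir, real_inner_smul_right]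
  have hg_vhat : ⟪g, xstar - vhat⟫ ≤ ⟪g, xstar - v⟫ := by
    simpa only [inner_sub_right, sub_le_sub_iff_left] using hg vhat hvhat.1
  have hconvex : ⟪gradf y, ((1 - δ) • x + δ • xstar) - y⟫ ≤ (1 - δ) * f x + δ * f xstar - f y :=
    (hf.inner_gradient_sub_le hyX hzX (hgrad y)).trans
      (by simpa only [smul_eq_mul, sub_le_sub_iff_right] using
        hf.2 hx hxstar (by linarith : 0 ≤ 1 - δ) hδ0 (by ring))
  have hdescent : ⟪gradf y, y - x'⟫ ≤ f y - f x' + L / 2 * (δ * D) ^ 2 := by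
    have := hX.le_add_inner_gradient_add_sq_of_lipschitz hgrad hlip hyX hx'X
    have : L / 2 * ‖x' - y‖ ^ 2 ≤ L / 2 * (δ * D) ^ 2 := by gcongr
    rw [← neg_sub, inner_neg_right]
    linarith
  linarith [mul_le_mul_of_nonneg_left hg_vhat (by linarith : 0 ≤ 1 - δ)]

end ExtraFW

theorem le_of_frankWolfe_recursion {Φ : ℕ → ℝ} {a c : ℝ} (hc : 0 ≤ c) (h0 : Φ 0 ≤ a)
    (hstep : ∀ k : ℕ, Φ (k + 1) ≤
      (1 - 2 / ((k : ℝ) + 3)) * Φ k + 3 / 2 * (2 / ((k : ℝ) + 3)) ^ 2 * c) (k : ℕ) :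
    Φ k ≤ 2 * a / (((k : ℝ) + 1) * ((k : ℝ) + 2)) + 6 * c / ((k : ℝ) + 2) := by
  induction k with
  | zero => norm_num; linarith
  | succ k ih =>
    have hK : (0 : ℝ) ≤ k := k.cast_nonneg
    have hcontr : 0 ≤ 1 - 2 / ((k : ℝ) + 3) := by
      rw [sub_nonneg, div_le_one (by positivity)]; linarith
    have hexact : (1 - 2 / ((k : ℝ) + 3)) * (2 * a / ((k + 1) * (k + 2)) + 6 * c / (k + 2))
        + 3 / 2 * (2 / ((k : ℝ) + 3)) ^ 2 * c + 6 * c / ((k + 2) * (k + 3) ^ 2)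
        = 2 * a / ((k + 2) * (k + 3)) + 6 * c / (k + 3) := by
      field_simp; ring
    have hslack : 0 ≤ 6 * c / (((k : ℝ) + 2) * ((k : ℝ) + 3) ^ 2) := by positivity
    rw [Nat.cast_succ, show (k : ℝ) + 1 + 1 = k + 2 by ring, show (k : ℝ) + 1 + 2 = k + 3 by ring]
    linarith [hstep k, mul_le_mul_of_nonneg_left ih hcontr]

theorem extrafw_convergence_general
    {d : ℕ} (X : Set (EuclideanSpace ℝ (Fin d)))
    (hXconv : Convex ℝ X)
    (f : EuclideanSpace ℝ (Fin d) → ℝ)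
    (gradf : EuclideanSpace ℝ (Fin d) → EuclideanSpace ℝ (Fin d))
    (hgrad : ∀ x, HasGradientAt f (gradf x) x)
    (hconv : ConvexOn ℝ X f)
    (L D : ℝ) (hL : 0 < L) (hD : 0 < D)
    (hlip : ∀ x ∈ X, ∀ y ∈ X, ‖gradf x - gradf y‖ ≤ L * ‖x - y‖)
    (hdiam : ∀ x ∈ X, ∀ y ∈ X, ‖x - y‖ ≤ D)
    (δ : ℕ → ℝ) (hδ : ∀ k, δ k = 2 / ((k : ℝ) + 3))
    (x v vhat y g ghat : ℕ → EuclideanSpace ℝ (Fin d))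
    (hx0 : x 0 ∈ X) (hv0 : v 0 = x 0) (hg0 : g 0 = 0)
    (hy : ∀ k, y k = (1 - δ k) • x k + δ k • v k)
    (hghat : ∀ k, ghat (k+1) = (1 - δ k) • g k + δ k • gradf (y k))
    (hvhat : ∀ k, vhat (k+1) ∈ X ∧
      ∀ u ∈ X, ⟪ghat (k+1), vhat (k+1)⟫ ≤ ⟪ghat (k+1), u⟫)
    (hxrec : ∀ k, x (k+1) = (1 - δ k) • x k + δ k • vhat (k+1))
    (hgrec : ∀ k, g (k+1) = (1 - δ k) • g k + δ k • gradf (x (k+1)))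
    (hv : ∀ k, v (k+1) ∈ X ∧ ∀ u ∈ X, ⟪g (k+1), v (k+1)⟫ ≤ ⟪g (k+1), u⟫)
    (xstar : EuclideanSpace ℝ (Fin d)) (hxstar : xstar ∈ X) :
    ∀ k, f (x k) - f xstar ≤
      2 * (f (x 0) - f xstar) / (((k : ℝ) + 1) * ((k : ℝ) + 2)) +
        6 * L * D^2 / ((k : ℝ) + 2) := by
  have hδ0 (k : ℕ) : 0 ≤ δ k := by rw [hδ]; positivity
  have hδ1 (k : ℕ) : δ k ≤ 1 := by
    rw [hδ, div_le_one (by positivity)]; linarith [k.cast_nonneg (α := ℝ)]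
  have hxX (k : ℕ) : x k ∈ X := by
    induction k with
    | zero => exact hx0
    | succ k ih => exact hxrec k ▸ hXconv ih (hvhat k).1 (by linarith [hδ1 k]) (hδ0 k) (by ring)
  have hvX : ∀ k, v k ∈ X
    | 0 => hv0 ▸ hx0
    | k + 1 => (hv k).1
  have hv_min : ∀ k, ∀ u ∈ X, ⟪g k, v k⟫ ≤ ⟪g k, u⟫
    | 0 => by simp [hg0]
    | k + 1 => (hv k).2
  intro k
  have hpotential := le_of_frankWolfe_recursion
    (Φ := fun k ↦ f (x k) - f xstar + ⟪g k, xstar - v k⟫)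
    (a := f (x 0) - f xstar) (mul_nonneg hL.le (sq_nonneg D)) (by simp [hg0])
    (fun k ↦ hδ k ▸ extraFW_potential_step hXconv hgrad hconv hL.le hD.le hlip hdiam (hδ0 k)
      (hδ1 k) (hxX k) (hvX k) hxstar (hv_min k) (hy k) (hghat k) (hvhat k) (hxrec k) (hgrec k)
      (hv k)) k
  have hgap : 0 ≤ ⟪g k, xstar - v k⟫ := by
    simpa only [inner_sub_right, sub_nonneg] using hv_min k xstar hxstar
  simp only [mul_assoc] at hpotential ⊢
  linarith

/-- Convergence of ExtraFW with step sizes `δ_k = 2/(k+3)` and `g_0 = 0`: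
`f(x_k) − f(x*) ≤ 2(f(x_0) − f(x*))/((k+1)(k+2)) + 6LD²/(k+2)`. -/
theorem extrafw_convergence
    {d : ℕ} (X : Set (EuclideanSpace ℝ (Fin d)))
    (hXconv : Convex ℝ X) (hXcomp : IsCompact X)
    (f : EuclideanSpace ℝ (Fin d) → ℝ)
    (gradf : EuclideanSpace ℝ (Fin d) → EuclideanSpace ℝ (Fin d))
    (hgrad : ∀ x, HasGradientAt f (gradf x) x)
    (hconv : ConvexOn ℝ X f)
    (L D : ℝ) (hL : 0 < L) (hD : 0 < D)
    (hlip : ∀ x ∈ X, ∀ y ∈ X, ‖gradf x - gradf y‖ ≤ L * ‖x - y‖)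
    (hdiam : ∀ x ∈ X, ∀ y ∈ X, ‖x - y‖ ≤ D)
    (δ : ℕ → ℝ) (hδ : ∀ k, δ k = 2 / ((k : ℝ) + 3))
    (x v vhat y g ghat : ℕ → EuclideanSpace ℝ (Fin d))
    (hx0 : x 0 ∈ X) (hv0 : v 0 = x 0) (hg0 : g 0 = 0)
    (hy : ∀ k, y k = (1 - δ k) • x k + δ k • v k)
    (hghat : ∀ k, ghat (k+1) = (1 - δ k) • g k + δ k • gradf (y k))
    (hvhat : ∀ k, vhat (k+1) ∈ X ∧
      ∀ u ∈ X, ⟪ghat (k+1), vhat (k+1)⟫ ≤ ⟪ghat (k+1), u⟫)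
    (hxrec : ∀ k, x (k+1) = (1 - δ k) • x k + δ k • vhat (k+1))
    (hgrec : ∀ k, g (k+1) = (1 - δ k) • g k + δ k • gradf (x (k+1)))
    (hv : ∀ k, v (k+1) ∈ X ∧ ∀ u ∈ X, ⟪g (k+1), v (k+1)⟫ ≤ ⟪g (k+1), u⟫)
    (xstar : EuclideanSpace ℝ (Fin d)) (hxstar : xstar ∈ X)
    (hmin : ∀ u ∈ X, f xstar ≤ f u) :
    ∀ k, f (x k) - f xstar ≤
      2 * (f (x 0) - f xstar) / (((k : ℝ) + 1) * ((k : ℝ) + 2)) +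
        6 * L * D^2 / ((k : ℝ) + 2) :=
  extrafw_convergence_general X hXconv f gradf hgrad hconv L D hL hD hlip hdiam δ hδ x v vhat y g
    ghat hx0 hv0 hg0 hy hghat hvhat hxrec hgrec hv xstar hxstar
end
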